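/- Let F : D → ℝ be a warping function whose weight w = (F⁻¹)′ satisfies w(x+y) ≤ C·w(x)·w(y) for all x,y ∈ ℝ, let 1 ≤ p < ∞ and X = L^p_w(ℝ). Then for every fixed f ∈ X, sup_{y∈ℝ} ‖f − E_{y,ε}f‖_X → 0 as ε → 0⁺; that is, the map ε ↦ sup_{y∈ℝ} ‖f − E_{y,ε}f‖_X is continuous at ε = 0. -/

import Mathlib

/-!
The phase of `E_{y,ε}` at `t` is `2πε (F⁻¹(t+y) − F⁻¹(y)) / w(y)`. Integrating
`w(s+y) ≤ C w(s) w(y)` over `s` between `0` and `t` bounds it by `2πεC |F⁻¹(t) − F⁻¹(0)|`,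
independently of `y`. Since also `|1 − e^{iθ}| ≤ min 2 |θ|`, every `w (f − E_{y,ε} f)` is
dominated pointwise by `|w f| · min 2 (2πεC |F⁻¹(t) − F⁻¹(0)|)`, whose `Lᵖ` norm tends to `0`
by dominated convergence because `p < ∞`.
-/

open MeasureTheory Filter Topology Set
open scoped ENNReal NNReal

noncomputable section

/-- A warping function `F : D → ℝ` (with `D = ℝ` or `D = (0,∞)`), bundled together with its
inverse `Finv`, its derivative `F'` and the associated weight `w = (F⁻¹)'`.  The fields record:
bijectivity of `F : D → ℝ`, `F ∈ C¹(D)` with `F' > 0`, strict decrease of `F'` in `|t|`,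
`w = (F⁻¹)'`, oddness of `F` when `D = ℝ`, and `v`-moderateness of `w` for some
submultiplicative weight `v`. -/
structure Warping where
  D : Set ℝ
  F : ℝ → ℝ
  Finv : ℝ → ℝ
  F' : ℝ → ℝ
  w : ℝ → ℝ
  hD : D = Set.univ ∨ D = Set.Ioi 0
  left_inv : ∀ x ∈ D, Finv (F x) = x
  mem_inv : ∀ s : ℝ, Finv s ∈ D
  right_inv : ∀ s : ℝ, F (Finv s) = s
  F_hasDeriv : ∀ t ∈ D, HasDerivAt F (F' t) t
  F'_cont : ContinuousOn F' D
  F'_pos : ∀ t ∈ D, 0 < F' t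
  F'_dec : ∀ t₀ ∈ D, ∀ t₁ ∈ D, |t₀| < |t₁| → F' t₁ < F' t₀
  w_hasDeriv : ∀ s : ℝ, HasDerivAt Finv (w s) s
  w_pos : ∀ s : ℝ, 0 < w s
  odd_of_univ : D = Set.univ → ∀ t, F (-t) = -F t
  moderate : ∃ (v : ℝ → ℝ) (C₀ : ℝ), (∀ x, 0 < v x) ∧ (∀ x y, v (x + y) ≤ v x * v y) ∧
      ∀ x y, w (x + y) ≤ C₀ * v x * w y

/-- The frequency-side warped atom `g_x = √(F'(x)) · (T_{F(x)}θ) ∘ F` on `D`, extended by zero. -/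
def gxFun (W : Warping) (θ : ℝ → ℂ) (x : ℝ) : ℝ → ℂ :=
  W.D.indicator fun t => (Real.sqrt (W.F' x) : ℂ) * θ (W.F t - W.F x)

/-- The Fourier transform of the warped time-frequency atom `g_{x,ξ} = T_ξ (ǧ_x)`:
`ĝ_{x,ξ}(t) = e^{-2πiξt} g_x(t)`. -/
def hatAtom (W : Warping) (θ : ℝ → ℂ) (x ξ : ℝ) : ℝ → ℂ := fun t =>
  gxFun W θ x t * Complex.exp (-(2 * Real.pi * Complex.I * ξ * t))

/-- The warped time-frequency transform `V_{θ,F} f (x,ξ) = ⟨f, g_{x,ξ}⟩`, expressed on the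
Fourier side (via Plancherel) in terms of `fh = f̂`:
`V_{θ,F} f (x,ξ) = ∫ f̂(t) conj(g_x(t)) e^{2πiξt} dt`. -/
def warpedTransform (W : Warping) (θ fh : ℝ → ℂ) (x ξ : ℝ) : ℂ :=
  ∫ t : ℝ, fh t * (starRingEnd ℂ) (gxFun W θ x t) * Complex.exp (2 * Real.pi * Complex.I * ξ * t)

/-- The operator `E_{y,ε}`: `(E_{y,ε}f)(t) = f(t) e^{2πiε(F⁻¹(t+y)−F⁻¹(y))/w(y)}`. -/
def Eop (W : Warping) (y ε : ℝ) (f : ℝ → ℂ) : ℝ → ℂ := fun t =>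
  f t * Complex.exp (2 * Real.pi * Complex.I * ε *
    (((W.Finv (t + y) - W.Finv y) / W.w y : ℝ) : ℂ))

theorem MeasureTheory.tendsto_eLpNorm_zero_of_dominated {α E ι : Type*} [MeasurableSpace α]
    {μ : Measure α} [NormedAddCommGroup E] {l : Filter ι} [l.IsCountablyGenerated] {p : ℝ≥0∞}
    (hp : p ≠ ∞) {F : ι → α → E} {G : α → ℝ} (hF : ∀ᶠ i in l, AEStronglyMeasurable (F i) μ)
    (hG : MemLp G p μ) (h_bound : ∀ᶠ i in l, ∀ᵐ x ∂μ, ‖F i x‖ ≤ G x)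
    (h_lim : ∀ᵐ x ∂μ, Tendsto (fun i => F i x) l (𝓝 0)) :
    Tendsto (fun i => eLpNorm (F i) p μ) l (𝓝 0) := by
  rcases eq_or_ne p 0 with rfl | hp0
  · simpa using tendsto_const_nhds
  have hq : 0 < p.toReal := ENNReal.toReal_pos hp0 hp
  simp_rw [eLpNorm_eq_lintegral_rpow_enorm_toReal hp0 hp]
  have h_int : Tendsto (fun i => ∫⁻ x, ‖F i x‖ₑ ^ p.toReal ∂μ) l (𝓝 0) := by
    have h_fin := (lintegral_rpow_enorm_lt_top_of_eLpNorm_lt_top hp0 hp hG.eLpNorm_lt_top).ne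
    have hcont : Continuous fun e : E => ‖e‖ₑ ^ p.toReal :=
      ENNReal.continuous_rpow_const.comp continuous_enorm
    simpa using tendsto_lintegral_filter_of_dominated_convergence' (f := fun _ => 0) _
      (hF.mono fun i hi => hi.enorm.pow_const _)
      (h_bound.mono fun i hi => hi.mono fun x hx => by
        gcongr
        rw [← ofReal_norm, ← ofReal_norm]
        exact ENNReal.ofReal_le_ofReal (hx.trans (Real.le_norm_self _)))
      h_fin
      (h_lim.mono fun x hx => (hcont.tendsto' 0 0 (by simp [ENNReal.zero_rpow_of_pos hq])).comp hx)
  exact (ENNReal.continuous_rpow_const.tendsto' 0 0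
    (ENNReal.zero_rpow_of_pos (one_div_pos.2 hq))).comp h_int

theorem MeasureTheory.tendsto_eLpNorm_norm_mul_min_zero {α E : Type*} [MeasurableSpace α]
    {μ : Measure α} [NormedAddCommGroup E] {p : ℝ≥0∞} (hp : p ≠ ∞) {g : α → E}
    (hg : MemLp g p μ) {h : α → ℝ} (hh : AEStronglyMeasurable h μ) (hh0 : ∀ x, 0 ≤ h x)
    {M : ℝ} (hM : 0 ≤ M) :
    Tendsto (fun ε : ℝ => eLpNorm (fun x => ‖g x‖ * min M (ε * h x)) p μ) (𝓝[>] 0) (𝓝 0) := by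
  refine tendsto_eLpNorm_zero_of_dominated hp (G := fun x => M * ‖g x‖)
    (Eventually.of_forall fun ε => hg.1.norm.mul (aestronglyMeasurable_const.inf
      (hh.const_mul ε))) (hg.norm.const_mul M) ?_ (ae_of_all _ fun x => ?_)
  · filter_upwards [self_mem_nhdsWithin] with ε (hε : 0 < ε)
    refine ae_of_all _ fun x => ?_
    have h_min : 0 ≤ min M (ε * h x) := le_min hM (mul_nonneg hε.le (hh0 x))
    rw [Real.norm_of_nonneg (by positivity), mul_comm]
    exact mul_le_mul_of_nonneg_right (min_le_left _ _) (norm_nonneg _)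
  · have h_cont : Continuous fun ε : ℝ => ‖g x‖ * min M (ε * h x) := by fun_prop
    exact (h_cont.tendsto' 0 0 (by simp [hM])).mono_left nhdsWithin_le_nhds

theorem Complex.norm_one_sub_exp_I_mul_ofReal_le (θ : ℝ) : ‖1 - exp (I * θ)‖ ≤ min 2 |θ| := by
  rw [norm_sub_rev]
  refine le_min ((norm_sub_le _ _).trans ?_) Real.norm_exp_I_mul_ofReal_sub_one_le
  rw [norm_exp_I_mul_ofReal, norm_one]
  norm_num

namespace Warping

variable (W : Warping)

theorem continuous_Finv : Continuous W.Finv :=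
  continuous_iff_continuousAt.2 fun s => (W.w_hasDeriv s).continuousAt

theorem F'_Finv_mul_w (s : ℝ) : W.F' (W.Finv s) * W.w s = 1 := by
  have h := (W.F_hasDeriv _ (W.mem_inv s)).comp s (W.w_hasDeriv s)
  rw [show W.F ∘ W.Finv = id from funext W.right_inv] at h
  exact h.unique (hasDerivAt_id s)

theorem continuous_w : Continuous W.w := by
  have hF' : Continuous fun s => W.F' (W.Finv s) :=
    W.F'_cont.comp_continuous W.continuous_Finv W.mem_inv
  convert hF'.inv₀ fun s => (W.F'_pos _ (W.mem_inv s)).ne' using 1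
  funext s
  exact eq_inv_of_mul_eq_one_right (W.F'_Finv_mul_w s)

theorem Finv_add_sub_Finv (y t : ℝ) :
    W.Finv (t + y) - W.Finv y = ∫ s in (0)..t, W.w (s + y) := by
  rw [intervalIntegral.integral_eq_sub_of_hasDerivAt (f := fun s => W.Finv (s + y))
    (fun s _ => (W.w_hasDeriv (s + y)).comp_add_const s y)
    ((W.continuous_w.comp (continuous_add_const y)).intervalIntegrable _ _), zero_add]

variable {W}

theorem pos_of_w_add_le {C : ℝ} (hwsub : ∀ x y, W.w (x + y) ≤ C * W.w x * W.w y) : 0 < C := by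
  have h := hwsub 0 0
  have h0 := W.w_pos 0
  rw [add_zero] at h
  by_contra! hC
  nlinarith [mul_pos h0 h0]

theorem abs_Finv_add_sub_le {C : ℝ} (hwsub : ∀ x y, W.w (x + y) ≤ C * W.w x * W.w y)
    (y t : ℝ) : |W.Finv (t + y) - W.Finv y| ≤ C * W.w y * |W.Finv t - W.Finv 0| := by
  have hC : 0 ≤ C * W.w y := (mul_pos (pos_of_w_add_le hwsub) (W.w_pos y)).le
  calc |W.Finv (t + y) - W.Finv y| = ‖∫ s in (0)..t, W.w (s + y)‖ := by
        rw [W.Finv_add_sub_Finv, Real.norm_eq_abs]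
    _ ≤ |∫ s in (0)..t, C * W.w y * W.w s| := by
        refine intervalIntegral.norm_integral_le_abs_of_norm_le (ae_of_all _ fun s => ?_)
          ((continuous_const.mul W.continuous_w).intervalIntegrable _ _)
        rw [Real.norm_of_nonneg (W.w_pos _).le]
        linarith [hwsub s y]
    _ = C * W.w y * |W.Finv t - W.Finv 0| := by
        rw [intervalIntegral.integral_const_mul, abs_mul, abs_of_nonneg hC,
          ← add_zero t, W.Finv_add_sub_Finv 0 t]
        simp only [add_zero]

end Warping

theorem Eop_apply (W : Warping) (y ε : ℝ) (f : ℝ → ℂ) (t : ℝ) :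
    Eop W y ε f t = f t *
      Complex.exp (Complex.I * ↑(2 * Real.pi * ε * ((W.Finv (t + y) - W.Finv y) / W.w y))) := by
  rw [Eop]
  push_cast
  ring_nf

theorem Eop_smul (W : Warping) (y ε : ℝ) (c : ℝ → ℝ) (f : ℝ → ℂ) (t : ℝ) :
    Eop W y ε (fun s => c s • f s) t = c t • Eop W y ε f t := by
  simp only [Eop, smul_mul_assoc]

theorem norm_sub_Eop_le {W : Warping} {C : ℝ} (hwsub : ∀ x y, W.w (x + y) ≤ C * W.w x * W.w y)
    {ε : ℝ} (hε : 0 ≤ ε) (f : ℝ → ℂ) (y t : ℝ) :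
    ‖f t - Eop W y ε f t‖ ≤ ‖f t‖ * min 2 (ε * (2 * Real.pi * C * |W.Finv t - W.Finv 0|)) := by
  rw [Eop_apply, ← mul_one_sub, norm_mul]
  refine mul_le_mul_of_nonneg_left ((Complex.norm_one_sub_exp_I_mul_ofReal_le _).trans
    (min_le_min_left 2 ?_)) (norm_nonneg _)
  have hw := W.w_pos y
  have h_key := Warping.abs_Finv_add_sub_le hwsub y t
  calc |2 * Real.pi * ε * ((W.Finv (t + y) - W.Finv y) / W.w y)|
      = ε * (2 * Real.pi * |W.Finv (t + y) - W.Finv y| / W.w y) := by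
        rw [abs_mul, abs_div, abs_of_pos hw, abs_of_nonneg (by positivity)]
        ring
    _ ≤ ε * (2 * Real.pi * C * |W.Finv t - W.Finv 0|) := by
        gcongr
        rw [div_le_iff₀ hw]
        nlinarith [Real.pi_pos]

theorem Eop_tendsto_zero_general
    (W : Warping) (C : ℝ)
    (hwsub : ∀ x y : ℝ, W.w (x + y) ≤ C * W.w x * W.w y)
    (p : ℝ≥0∞) (hp' : p ≠ ⊤)
    (f : ℝ → ℂ) (hf : MemLp (fun t : ℝ => W.w t • f t) p volume) :
    Tendsto (fun ε : ℝ =>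
        ⨆ y : ℝ, eLpNorm (fun t : ℝ => W.w t • (f t - Eop W y ε f t)) p volume)
      (nhdsWithin 0 (Set.Ioi 0)) (nhds 0) := by
  have hC := Warping.pos_of_w_add_le hwsub
  have hΦ : Continuous fun t => 2 * Real.pi * C * |W.Finv t - W.Finv 0| :=
    continuous_const.mul (W.continuous_Finv.sub continuous_const).abs
  have h_majorant := tendsto_eLpNorm_norm_mul_min_zero hp' hf hΦ.aestronglyMeasurable
    (fun t => by positivity) zero_le_two
  refine tendsto_of_tendsto_of_tendsto_of_le_of_le' tendsto_const_nhds h_majorant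
    (Eventually.of_forall fun _ => zero_le) ?_
  filter_upwards [self_mem_nhdsWithin] with ε (hε : 0 < ε)
  refine iSup_le fun y => eLpNorm_mono_real fun t => ?_
  rw [smul_sub, ← Eop_smul]
  exact norm_sub_Eop_le hwsub hε.le (fun s => W.w s • f s) y t

/-- Let `F : D → ℝ` be a warping function whose weight `w = (F⁻¹)'` satisfies
`w(x+y) ≤ C w(x) w(y)`, let `1 ≤ p < ∞` and `X = L^p_w(ℝ)`.  Then for every fixed `f ∈ X`,
`sup_{y∈ℝ} ‖f − E_{y,ε}f‖_X → 0` as `ε → 0⁺`. -/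
theorem Eop_tendsto_zero
    (W : Warping) (C : ℝ)
    (hwsub : ∀ x y : ℝ, W.w (x + y) ≤ C * W.w x * W.w y)
    (p : ℝ≥0∞) (hp : 1 ≤ p) (hp' : p ≠ ⊤)
    (f : ℝ → ℂ) (hf : MemLp (fun t : ℝ => W.w t • f t) p volume) :
    Tendsto (fun ε : ℝ =>
        ⨆ y : ℝ, eLpNorm (fun t : ℝ => W.w t • (f t - Eop W y ε f t)) p volume)
      (nhdsWithin 0 (Set.Ioi 0)) (nhds 0) :=
  Eop_tendsto_zero_general W C hwsub p hp' f hf
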